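/- Let L ≥ 1, n, m ≥ 1, A_1,…,A_L ∈ ℝ^{n×n}, B_1,…,B_L ∈ ℝ^{n×m}, and let Q ∈ ℝ^{n×n}, R ∈ ℝ^{m×m} be symmetric positive definite. Let q_1,…,q_M ∈ Δ^L, and define Ā, B̄, Σ_l as the stacked matrices Ā = [A_1; …; A_L], B̄ = [B_1; …; B_L] and Σ_l := blockdiag(q_l(1)I_n,…,q_l(L)I_n). Suppose there exist F ∈ ℝ^{m×n} and symmetric positive definite P ∈ ℝ^{n×n} such that for every l ∈ {1,…,M} the matrix Σ_{j=1}^L q_l(j)(A_j + B_j F)ᵀ P (A_j + B_j F) − P + FᵀRF + Q is negative definite. Then, setting G := P^{−1}, Q̄ := P^{−1}, and Y := F P^{−1}, for every l ∈ {1,…,M} the symmetric block matrix [[I_L ⊗ Q̄, 0, 0, −Σ_l^{1/2}(ĀG + B̄Y)], [∗, R^{−1}, 0, −Y], [∗, ∗, I_n, −Q^{1/2}G], [∗, ∗, ∗, −Q̄ + G + Gᵀ]] is positive definite; in particular F = Y G^{−1} and P = Q̄^{−1}. -/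

import Mathlib

open Matrix
open scoped Kronecker
open scoped MatrixOrder

/-- The vertically stacked matrix `Ā = [A_1; …; A_L]`. -/
def stackMat {L n k : ℕ} (A : Fin L → Matrix (Fin n) (Fin k) ℝ) :
    Matrix (Fin L × Fin n) (Fin k) ℝ :=
  Matrix.of fun li j => A li.1 li.2 j

/-- The square root `Σ_l^{1/2}` of the block-diagonal matrix
`Σ_l = blockdiag(q_l(1)I_n, …, q_l(L)I_n)`. -/
noncomputable def sigmaHalf {L : ℕ} (n : ℕ) (ql : Fin L → ℝ) :
    Matrix (Fin L × Fin n) (Fin L × Fin n) ℝ :=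
  Matrix.diagonal fun li => Real.sqrt (ql li.1)

/-- The 4×4 symmetric block matrix of the paper's LMI (13), with blocks of sizes
`Ln, m, n, n`; the lower-left blocks are determined by symmetry. -/
noncomputable def bigLMI {L n m : ℕ}
    (A : Fin L → Matrix (Fin n) (Fin n) ℝ) (B : Fin L → Matrix (Fin n) (Fin m) ℝ)
    (Q : Matrix (Fin n) (Fin n) ℝ) (hQ : Q.PosDef) (R : Matrix (Fin m) (Fin m) ℝ)
    (ql : Fin L → ℝ) (Y : Matrix (Fin m) (Fin n) ℝ)
    (G Qbar : Matrix (Fin n) (Fin n) ℝ) :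
    Matrix (((Fin L × Fin n) ⊕ Fin m) ⊕ (Fin n ⊕ Fin n))
      (((Fin L × Fin n) ⊕ Fin m) ⊕ (Fin n ⊕ Fin n)) ℝ :=
  Matrix.fromBlocks
    (Matrix.fromBlocks ((1 : Matrix (Fin L) (Fin L) ℝ) ⊗ₖ Qbar) 0 0 R⁻¹)
    (Matrix.fromBlocks 0 (-(sigmaHalf n ql * (stackMat A * G + stackMat B * Y)))
      0 (-Y))
    (Matrix.fromBlocks 0 (-(sigmaHalf n ql * (stackMat A * G + stackMat B * Y)))
      0 (-Y))ᵀ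
    (Matrix.fromBlocks 1 (-(CFC.sqrt Q * G))
      (-(CFC.sqrt Q * G))ᵀ (-Qbar + G + Gᵀ))

/-!
With `G = Q̄ = P⁻¹` and `Y = F P⁻¹`, the last block column of the LMI has upper part
`-[Σ^{1/2} Ñ P⁻¹; F P⁻¹]`, where `Ñ` stacks the closed-loop matrices `N_j = A_j + B_j F`.
Taking the Schur complement of the block-diagonal `blockdiag(I_L ⊗ P⁻¹, R⁻¹)` and then of the
identity block leaves `P⁻¹ (P - ∑_j q(j) N_jᵀ P N_j - FᵀRF - Q) P⁻¹`, a congruence of the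
positive definite matrix of the terminal-cost condition, because
`(Σ^{1/2} Ñ)ᵀ (I_L ⊗ P) (Σ^{1/2} Ñ) = ∑_j q(j) N_jᵀ P N_j`.
-/

open scoped ComplexOrder in
theorem Matrix.PosDef.fromBlocks_of_schur {𝕜 m n : Type*} [RCLike 𝕜] [Fintype m] [Fintype n]
    [DecidableEq m] [DecidableEq n] {A : Matrix m m 𝕜} (B : Matrix m n 𝕜) (D : Matrix n n 𝕜)
    (hA : A.PosDef) (hS : (D - Bᴴ * A⁻¹ * B).PosDef) : (fromBlocks A B Bᴴ D).PosDef := by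
  let := hA.isUnit.invertible
  refine ((PosDef.fromBlocks₁₁ B D hA).2 hS.posSemidef).posDef_iff_isUnit.2 ?_
  rw [isUnit_iff_isUnit_det, det_fromBlocks₁₁, invOf_eq_nonsing_inv]
  exact (isUnit_iff_isUnit_det _ |>.1 hA.isUnit).mul (isUnit_iff_isUnit_det _ |>.1 hS.isUnit)

theorem Matrix.fromBlocks_zero_conjTranspose_mul_inv_mul {k l m n α : Type*} [Fintype l]
    [Fintype m] [DecidableEq l] [DecidableEq m] [CommRing α] [StarRing α]
    {A₁ : Matrix l l α} {A₂ : Matrix m m α} (hA₁ : IsUnit A₁) (hA₂ : IsUnit A₂)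
    (C₁ : Matrix l n α) (C₂ : Matrix m n α) :
    (fromBlocks (0 : Matrix l k α) C₁ 0 C₂)ᴴ * (fromBlocks A₁ 0 0 A₂)⁻¹ *
        fromBlocks (0 : Matrix l k α) C₁ 0 C₂ =
      fromBlocks 0 0 0 (C₁ᴴ * A₁⁻¹ * C₁ + C₂ᴴ * A₂⁻¹ * C₂) := by
  rw [inv_fromBlocks_zero₁₂_of_isUnit_iff _ _ _ (iff_of_true hA₁ hA₂), fromBlocks_conjTranspose,
    fromBlocks_multiply, fromBlocks_multiply]
  simp [Matrix.mul_assoc]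

open scoped ComplexOrder in
theorem Matrix.PosSemidef.conjTranspose_sqrt_mul_mul_sqrt_mul {𝕜 n k : Type*} [RCLike 𝕜]
    [Fintype n] [DecidableEq n] {Q : Matrix n n 𝕜} (hQ : Q.PosSemidef) (G : Matrix n k 𝕜) :
    (CFC.sqrt Q * G)ᴴ * (CFC.sqrt Q * G) = Gᴴ * Q * G := by
  rw [conjTranspose_mul, (CFC.sqrt_nonneg Q).posSemidef.1.eq, Matrix.mul_assoc,
    ← Matrix.mul_assoc (CFC.sqrt Q), CFC.sqrt_mul_sqrt_self Q hQ.nonneg, Matrix.mul_assoc]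

theorem stackMat_mul {L n k p : ℕ} (M : Fin L → Matrix (Fin n) (Fin k) ℝ)
    (G : Matrix (Fin k) (Fin p) ℝ) : stackMat M * G = stackMat fun j => M j * G := by
  ext ⟨j, i⟩ c
  simp [stackMat, mul_apply]

theorem stackMat_add {L n k : ℕ} (M M' : Fin L → Matrix (Fin n) (Fin k) ℝ) :
    stackMat M + stackMat M' = stackMat fun j => M j + M' j := by
  ext ⟨j, i⟩ c
  simp [stackMat]

theorem sigmaHalf_mul_stackMat {L n k : ℕ} (ql : Fin L → ℝ)
    (M : Fin L → Matrix (Fin n) (Fin k) ℝ) :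
    sigmaHalf n ql * stackMat M = stackMat fun j => √(ql j) • M j := by
  ext ⟨j, i⟩ c
  simp [sigmaHalf, stackMat]

theorem stackMat_transpose_mul_one_kronecker_mul {L n k p : ℕ}
    (M : Fin L → Matrix (Fin n) (Fin k) ℝ) (P : Matrix (Fin n) (Fin n) ℝ)
    (M' : Fin L → Matrix (Fin n) (Fin p) ℝ) :
    (stackMat M)ᵀ * ((1 : Matrix (Fin L) (Fin L) ℝ) ⊗ₖ P) * stackMat M' =
      ∑ j, (M j)ᵀ * P * M' j := by
  ext a c
  simp [stackMat, mul_apply, Fintype.sum_prod_type, Matrix.sum_apply, one_apply, Finset.sum_mul]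

theorem sigmaHalf_mul_stackMat_transpose_mul_one_kronecker_mul {L n k : ℕ} {ql : Fin L → ℝ}
    (hql : 0 ≤ ql) (M : Fin L → Matrix (Fin n) (Fin k) ℝ) (P : Matrix (Fin n) (Fin n) ℝ) :
    (sigmaHalf n ql * stackMat M)ᵀ * ((1 : Matrix (Fin L) (Fin L) ℝ) ⊗ₖ P) *
      (sigmaHalf n ql * stackMat M) = ∑ j, ql j • ((M j)ᵀ * P * M j) := by
  rw [sigmaHalf_mul_stackMat, stackMat_transpose_mul_one_kronecker_mul]
  refine Finset.sum_congr rfl fun j _ => ?_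
  simp [smul_smul, Real.mul_self_sqrt (hql j)]

theorem posDef_bigLMI_of_terminalCost {L n m : ℕ}
    (A : Fin L → Matrix (Fin n) (Fin n) ℝ) (B : Fin L → Matrix (Fin n) (Fin m) ℝ)
    (Q : Matrix (Fin n) (Fin n) ℝ) (hQ : Q.PosDef) (R : Matrix (Fin m) (Fin m) ℝ)
    (hR : R.PosDef) (ql : Fin L → ℝ) (hql : 0 ≤ ql) (F : Matrix (Fin m) (Fin n) ℝ)
    (P : Matrix (Fin n) (Fin n) ℝ) (hP : P.PosDef)
    (hneg : (-((∑ j, ql j • ((A j + B j * F)ᵀ * P * (A j + B j * F)))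
          - P + Fᵀ * R * F + Q)).PosDef) :
    (bigLMI A B Q hQ R ql (F * P⁻¹) P⁻¹ P⁻¹).PosDef := by
  have hPdet : IsUnit P.det := (isUnit_iff_isUnit_det P).1 hP.isUnit
  set N : Fin L → Matrix (Fin n) (Fin n) ℝ := fun j => A j + B j * F
  set S := ∑ j, ql j • ((N j)ᵀ * P * N j) with hS
  have hstack : stackMat A * P⁻¹ + stackMat B * (F * P⁻¹) = stackMat N * P⁻¹ := by
    simp only [stackMat_mul, stackMat_add, N, add_mul, Matrix.mul_assoc]
  have hweighted : (sigmaHalf n ql * (stackMat N * P⁻¹))ᵀ *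
      ((1 : Matrix (Fin L) (Fin L) ℝ) ⊗ₖ P⁻¹)⁻¹ * (sigmaHalf n ql * (stackMat N * P⁻¹)) =
      (P⁻¹)ᵀ * S * P⁻¹ := by
    rw [inv_kronecker, inv_one, nonsing_inv_nonsing_inv _ hPdet, hS,
      ← sigmaHalf_mul_stackMat_transpose_mul_one_kronecker_mul hql,
      ← Matrix.mul_assoc (sigmaHalf n ql), transpose_mul _ P⁻¹]
    simp only [Matrix.mul_assoc]
  have hsqrt : (CFC.sqrt Q * P⁻¹)ᵀ * (CFC.sqrt Q * P⁻¹) = (P⁻¹)ᵀ * Q * P⁻¹ := by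
    simpa only [conjTranspose_eq_transpose_of_trivial] using
      hQ.posSemidef.conjTranspose_sqrt_mul_mul_sqrt_mul P⁻¹
  have hPinv : (P⁻¹)ᵀ * P * P⁻¹ = (P⁻¹)ᵀ := by
    rw [Matrix.mul_assoc, mul_nonsing_inv _ hPdet, Matrix.mul_one]
  have hX₁ : (fromBlocks ((1 : Matrix (Fin L) (Fin L) ℝ) ⊗ₖ P⁻¹) 0 0 R⁻¹).PosDef := by
    simpa using PosDef.fromBlocks_of_schur (A := (1 : Matrix (Fin L) (Fin L) ℝ) ⊗ₖ P⁻¹) 0 R⁻¹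
      (PosDef.one.kronecker hP.inv) (by simpa using hR.inv)
  simp only [bigLMI, hstack, ← conjTranspose_eq_transpose_of_trivial]
  refine hX₁.fromBlocks_of_schur _ _ ?_
  rw [fromBlocks_zero_conjTranspose_mul_inv_mul (PosDef.one.kronecker hP.inv).isUnit hR.inv.isUnit,
    sub_eq_add_neg, fromBlocks_neg, fromBlocks_add]
  simp only [add_zero, neg_zero]
  refine PosDef.one.fromBlocks_of_schur _ _ ?_
  refine (congrArg PosDef ?_).mpr ((IsUnit.posDef_star_left_conjugate_iff hP.inv.isUnit).2 hneg)
  simp only [conjTranspose_eq_transpose_of_trivial, star_eq_conjTranspose, transpose_neg,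
    Matrix.neg_mul, Matrix.mul_neg, neg_neg, inv_one, Matrix.mul_one, hweighted, hsqrt,
    nonsing_inv_nonsing_inv _ ((isUnit_iff_isUnit_det R).1 hR.isUnit)]
  simp only [Matrix.mul_add, Matrix.add_mul, Matrix.mul_sub, Matrix.sub_mul, hPinv,
    transpose_mul F, Matrix.mul_assoc]
  abel

theorem stmt_16_general (L n m M : ℕ)
    (A : Fin L → Matrix (Fin n) (Fin n) ℝ) (B : Fin L → Matrix (Fin n) (Fin m) ℝ)
    (Q : Matrix (Fin n) (Fin n) ℝ) (R : Matrix (Fin m) (Fin m) ℝ)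
    (hQ : Q.PosDef) (hR : R.PosDef)
    (q : Fin M → Fin L → ℝ) (hq : ∀ l, q l ∈ stdSimplex ℝ (Fin L))
    (F : Matrix (Fin m) (Fin n) ℝ)
    (P : Matrix (Fin n) (Fin n) ℝ) (hP : P.PosDef)
    (hneg : ∀ l : Fin M,
      (-((∑ j, q l j • ((A j + B j * F)ᵀ * P * (A j + B j * F)))
          - P + Fᵀ * R * F + Q)).PosDef) :
    (∀ l : Fin M, (bigLMI A B Q hQ R (q l) (F * P⁻¹) P⁻¹ P⁻¹).PosDef) ∧
    F = (F * P⁻¹) * (P⁻¹)⁻¹ ∧ P = (P⁻¹)⁻¹ := by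
  have hPdet : IsUnit P.det := (isUnit_iff_isUnit_det P).1 hP.isUnit
  refine ⟨fun l => posDef_bigLMI_of_terminalCost A B Q hQ R hR (q l) (hq l).1 F P hP (hneg l),
    ?_, (nonsing_inv_nonsing_inv P hPdet).symm⟩
  rw [nonsing_inv_nonsing_inv P hPdet, nonsing_inv_mul_cancel_right P F hPdet]

/-- Converse direction of the LMI characterization (Theorem 4 of the paper): if the
terminal-cost condition (11) holds with `F` and positive definite `P`, then the LMI (13)
is feasible with `G = Q̄ = P⁻¹` and `Y = FP⁻¹`; in particular `F = YG⁻¹`, `P = Q̄⁻¹`. -/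
theorem stmt_16 (L n m M : ℕ) (hL : 1 ≤ L) (hn : 1 ≤ n) (hm : 1 ≤ m) (hM : 1 ≤ M)
    (A : Fin L → Matrix (Fin n) (Fin n) ℝ) (B : Fin L → Matrix (Fin n) (Fin m) ℝ)
    (Q : Matrix (Fin n) (Fin n) ℝ) (R : Matrix (Fin m) (Fin m) ℝ)
    (hQ : Q.PosDef) (hR : R.PosDef)
    (q : Fin M → Fin L → ℝ) (hq : ∀ l, q l ∈ stdSimplex ℝ (Fin L))
    (F : Matrix (Fin m) (Fin n) ℝ)
    (P : Matrix (Fin n) (Fin n) ℝ) (hP : P.PosDef)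
    (hneg : ∀ l : Fin M,
      (-((∑ j, q l j • ((A j + B j * F)ᵀ * P * (A j + B j * F)))
          - P + Fᵀ * R * F + Q)).PosDef) :
    (∀ l : Fin M, (bigLMI A B Q hQ R (q l) (F * P⁻¹) P⁻¹ P⁻¹).PosDef) ∧
    F = (F * P⁻¹) * (P⁻¹)⁻¹ ∧ P = (P⁻¹)⁻¹ :=
  stmt_16_general L n m M A B Q R hQ hR q hq F P hP hneg
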